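/- Let X be a commutative topological algebra over K (K = ℝ or ℂ), M a subset of X, and α a cardinal with α ≥ ℵ₀ and α ≥ w(X). Then M is α-infinitely strongly α-dense-algebrable if, and only if, M is strongly α-dense-algebrable. -/

import Mathlib

universe u

open Cardinal

/-- The weight of a topological space: the smallest cardinality of a basis for its topology. -/
noncomputable def tsWeight (X : Type u) [TopologicalSpace X] : Cardinal.{u} :=
  sInf { c : Cardinal.{u} | ∃ B : Set (Set X),
    TopologicalSpace.IsTopologicalBasis B ∧ #↥B = c }

variable (𝕜 : Type) [RCLike 𝕜] {X : Type} [NonUnitalCommRing X] [Module 𝕜 X]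
  [SMulCommClass 𝕜 X X] [IsScalarTower 𝕜 X X]

/-- `S` is a set of free generators (SFG): for every `n`, every nonzero polynomial `P` in `n`
variables with no constant term and all pairwise distinct `x₁, …, x_n ∈ S` one has
`P(x₁, …, x_n) ≠ 0`.  (The evaluation of a polynomial with no constant term at elements of the
non-unital algebra `X` is performed inside the unitization of `X`, where it lands in the copy
of `X`.) -/
def IsSFG (S : Set X) : Prop :=
  ∀ (n : ℕ) (x : Fin n → X), (∀ i, x i ∈ S) → Function.Injective x →
    ∀ P : MvPolynomial (Fin n) 𝕜, P ≠ 0 → MvPolynomial.constantCoeff P = 0 →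
      MvPolynomial.aeval (fun i => (x i : Unitization 𝕜 X)) P ≠ 0

/-- `M` is strongly `α`-dense-algebrable: there is a set of free generators `F` with `|F| = α`,
`⟨F⟩` dense in `X` and `⟨F⟩ ⊆ M ∪ {0}`. -/
def StronglyDenseAlgebrable [TopologicalSpace X] (M : Set X) (α : Cardinal) : Prop :=
  ∃ F : Set X, IsSFG 𝕜 F ∧ #↥F = α ∧
    Dense ((NonUnitalAlgebra.adjoin 𝕜 F : NonUnitalSubalgebra 𝕜 X) : Set X) ∧
    ((NonUnitalAlgebra.adjoin 𝕜 F : NonUnitalSubalgebra 𝕜 X) : Set X) ⊆ M ∪ {0}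

/-- `M` is `α`-infinitely strongly `β`-dense-algebrable: there is a family `{Y_κ}_{κ<α}` of
dense `β`-generated free subalgebras of `X` contained in `M ∪ {0}` with pairwise trivial
intersections. -/
def InfStronglyDenseAlgebrable [TopologicalSpace X] (M : Set X) (α β : Cardinal) : Prop :=
  ∃ (ι : Type) (F : ι → Set X), #ι = α ∧
    (∀ i, IsSFG 𝕜 (F i) ∧ #↥(F i) = β ∧
      Dense ((NonUnitalAlgebra.adjoin 𝕜 (F i) : NonUnitalSubalgebra 𝕜 X) : Set X) ∧
      ((NonUnitalAlgebra.adjoin 𝕜 (F i) : NonUnitalSubalgebra 𝕜 X) : Set X) ⊆ M ∪ {0}) ∧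
    ∀ i j, i ≠ j →
      NonUnitalAlgebra.adjoin 𝕜 (F i) ⊓ NonUnitalAlgebra.adjoin 𝕜 (F j) =
        (⊥ : NonUnitalSubalgebra 𝕜 X)

/-! For the nontrivial direction let `F` be free generators of a dense subalgebra `⟨F⟩ ⊆ M ∪ {0}`,
indexed by the initial ordinal of `α`, and for each of the at most `α` nonempty basic open sets `U`
pick `d_U ∈ ⟨F⟩ ∩ U`. Take `α · α` copies of every `U` and perturb `d_U` to `d_U + c • f`, where
the generator `f` is fresh and larger than every generator occurring in `d_U` (initial segments
have fewer than `α` elements), and `c ≠ 0` is small enough to stay in `U`. This family is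
triangular with respect to the well-order, so it is algebraically independent: the inverse
substitution is built by well-founded recursion. Cutting it into `α` blocks of size `α` gives dense
free subalgebras of `⟨F⟩`, and algebraic independence of the whole family makes the subalgebras
generated by disjoint blocks meet only in `0`.
-/

namespace MvPolynomial

variable {K V T : Type*} [Field K] [LT V] [WellFoundedLT V]

theorem exists_aeval_add_smul_X_eq_X {d : T → MvPolynomial V K} {s : T → V}
    (hs : Function.Injective s) (hd : ∀ t, ∀ w ∈ (d t).vars, w < s t) {c : T → K}
    (hc : ∀ t, c t ≠ 0) :
    ∃ Θ : V → MvPolynomial T K, ∀ t, aeval Θ (d t + c t • MvPolynomial.X (s t)) = .X t := by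
  classical
  -- `Θ (s t) = (X t - Θ (d t)) / c t`, where `Θ (d t)` only needs `Θ` below `s t`.
  let Θ : V → MvPolynomial T K := wellFounded_lt.fix fun v rec =>
    if h : ∃ t, s t = v then
      (c h.choose)⁻¹ • (.X h.choose - aeval (fun w => if hw : w < v then rec w hw else 0)
        (d h.choose))
    else 0
  have hΘ : ∀ t, Θ (s t) = (c t)⁻¹ • (.X t - aeval Θ (d t)) := by
    intro t
    have hex : ∃ t', s t' = s t := ⟨t, rfl⟩
    rw [show Θ (s t) = _ from wellFounded_lt.fix_eq _ _, dif_pos hex, hs hex.choose_spec]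
    congr 2
    rw [aeval_eq_eval₂Hom, aeval_eq_eval₂Hom]
    exact eval₂Hom_congr' rfl (fun w hw _ => dif_pos (hd t w hw)) rfl
  refine ⟨Θ, fun t => ?_⟩
  rw [map_add, map_smul, aeval_X, hΘ, smul_smul, mul_inv_cancel₀ (hc t), one_smul,
    add_sub_cancel]

theorem algebraicIndependent_add_smul_X {d : T → MvPolynomial V K} {s : T → V}
    (hs : Function.Injective s) (hd : ∀ t, ∀ w ∈ (d t).vars, w < s t) {c : T → K}
    (hc : ∀ t, c t ≠ 0) :
    AlgebraicIndependent K fun t => d t + c t • MvPolynomial.X (s t) := by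
  obtain ⟨Θ, hΘ⟩ := exists_aeval_add_smul_X_eq_X hs hd hc
  have hinv : (aeval Θ).comp (aeval fun t => d t + c t • MvPolynomial.X (s t)) = AlgHom.id K _ :=
    algHom_ext fun t => by simpa using hΘ t
  exact algebraicIndependent_iff_injective_aeval.mpr
    (Function.LeftInverse.injective (g := aeval Θ) fun p => by simpa using congr($hinv p))

end MvPolynomial

namespace Cardinal

open scoped Ordinal

theorem exists_injective_forall_notMem {T V : Type u} [LinearOrder V] [WellFoundedLT V]
    (hV : ord #V = typeLT V) (hV0 : ℵ₀ ≤ #V) (hT : #T ≤ #V) (bad : T → Set V)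
    (hbad : ∀ t, #(bad t) < #V) :
    ∃ s : T → V, Function.Injective s ∧ ∀ t, s t ∉ bad t := by
  obtain ⟨e⟩ := hT
  have hfresh : ∀ t (g : {t' // e t' < e t} → V), ∃ v, v ∉ bad t ∪ Set.range g := by
    intro t g
    have hpred : #{t' // e t' < e t} < #V :=
      (mk_le_of_injective (f := fun p => (⟨e p.1, p.2⟩ : Set.Iio (e t)))
        fun p q h => Subtype.ext (e.injective (congrArg Subtype.val h))).trans_lt (mk_Iio_lt _ hV)
    have hsmall : #↥(bad t ∪ Set.range g) < #V :=
      (mk_union_le _ _).trans_lt (add_lt_of_lt hV0 (hbad t) (mk_range_le.trans_lt hpred))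
    by_contra! h
    rw [Set.eq_univ_of_forall h, mk_univ] at hsmall
    exact hsmall.false
  let s : T → V := (InvImage.wf e wellFounded_lt).fix fun t rec =>
    (hfresh t fun p => rec p.1 p.2).choose
  have hs : ∀ t, s t ∉ bad t ∪ Set.range fun p : {t' // e t' < e t} => s p.1 := fun t => by
    rw [show s t = _ from (InvImage.wf e wellFounded_lt).fix_eq _ t]
    exact (hfresh t _).choose_spec
  have hne : ∀ a b, e a < e b → s a ≠ s b := fun a b hab h =>
    hs b (Or.inr ⟨⟨a, hab⟩, h⟩)
  refine ⟨s, fun a b hab => ?_, fun t h => hs t (Or.inl h)⟩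
  rcases lt_trichotomy (e a) (e b) with h | h | h
  · exact absurd hab (hne a b h)
  · exact e.injective h
  · exact absurd hab.symm (hne b a h)

theorem exists_injective_forall_lt {T V : Type u} [LinearOrder V] [WellFoundedLT V]
    (hV : ord #V = typeLT V) (hV0 : ℵ₀ ≤ #V) (hT : #T ≤ #V) (b : T → V) :
    ∃ s : T → V, Function.Injective s ∧ ∀ t, b t < s t := by
  obtain ⟨s, hs, hsb⟩ := exists_injective_forall_notMem hV hV0 hT (fun t => Set.Iic (b t))
    fun t => mk_Iic_lt _ hV hV0
  exact ⟨s, hs, fun t => not_le.mp (hsb t)⟩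

end Cardinal

open scoped Ordinal in
theorem AlgebraicIndependent.exists_add_smul {K A : Type*} {V T : Type u} [Field K] [CommRing A]
    [Algebra K A] [LinearOrder V] [WellFoundedLT V] (hV : ord #V = typeLT V) (hV0 : ℵ₀ ≤ #V)
    (hT : #T ≤ #V) {x : V → A} (hx : AlgebraicIndependent K x) (d : T → MvPolynomial V K) :
    ∃ s : T → V, ∀ c : T → K, (∀ t, c t ≠ 0) →
      AlgebraicIndependent K fun t => MvPolynomial.aeval x (d t) + c t • x (s t) := by
  have : Nonempty V := mk_ne_zero_iff.mp (aleph0_pos.trans_le hV0).ne'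
  choose b hb using fun t => (d t).vars.exists_le
  obtain ⟨s, hs, hbs⟩ := exists_injective_forall_lt hV hV0 hT b
  refine ⟨s, fun c hc => ?_⟩
  simpa [Function.comp_def] using (MvPolynomial.algebraicIndependent_add_smul_X hs
    (fun t w hw => (hb t w hw).trans_lt (hbs t)) hc).map' hx

theorem AlgebraicIndependent.adjoin_image_inf_adjoin_image {R A ι : Type*} [CommRing R]
    [CommRing A] [Algebra R A] {x : ι → A} (hx : AlgebraicIndependent R x) {s t : Set ι}
    (hst : Disjoint s t) : Algebra.adjoin R (x '' s) ⊓ Algebra.adjoin R (x '' t) = ⊥ := by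
  have hadj : ∀ u : Set ι, Algebra.adjoin R (x '' u) = (MvPolynomial.supported R u).map
      (MvPolynomial.aeval x) := fun u => by
    rw [MvPolynomial.supported_eq_adjoin_X, ← Algebra.adjoin_image, Set.image_image]
    simp
  rw [eq_bot_iff]
  rintro _ ⟨hs, ht⟩
  rw [SetLike.mem_coe, hadj] at hs ht
  obtain ⟨p, hp, rfl⟩ := hs
  obtain ⟨q, hq, hpq⟩ := ht
  rw [hx hpq] at hq
  have : p ∈ MvPolynomial.supported R (∅ : Set ι) := MvPolynomial.mem_supported.mpr
    (Set.subset_inter (MvPolynomial.mem_supported.mp hp) (MvPolynomial.mem_supported.mp hq)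
      |>.trans hst.inter_eq.subset)
  rw [MvPolynomial.supported_empty, Algebra.mem_bot] at this
  obtain ⟨r, rfl⟩ := this
  simp

namespace Unitization

variable {R A : Type*} [CommRing R] [NonUnitalCommRing A] [Module R A] [IsScalarTower R A A]
  [SMulCommClass R A A]

theorem fst_aeval_inr {σ : Type*} (g : σ → A) (p : MvPolynomial σ R) :
    (MvPolynomial.aeval (fun i => (g i : Unitization R A)) p).fst =
      MvPolynomial.constantCoeff p := by
  simpa using MvPolynomial.comp_aeval_apply (fun i => (g i : Unitization R A)) (fstHom R A) p

theorem inr_mem_adjoin {s : Set A} {a : A} (ha : a ∈ NonUnitalAlgebra.adjoin R s) :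
    (a : Unitization R A) ∈ Algebra.adjoin R ((↑) '' s : Set (Unitization R A)) :=
  have hle : NonUnitalAlgebra.adjoin R s ≤
      (Algebra.adjoin R ((↑) '' s)).toNonUnitalSubalgebra.comap (inrNonUnitalAlgHom R A) :=
    NonUnitalAlgebra.adjoin_le fun b hb => Algebra.subset_adjoin ⟨b, hb, rfl⟩
  hle ha

theorem inr_mem_bot {a : A} (ha : (a : Unitization R A) ∈ (⊥ : Subalgebra R (Unitization R A))) :
    a = 0 := by
  obtain ⟨r, hr⟩ := Algebra.mem_bot.mp ha
  simpa [algebraMap_eq_inl] using congr(($hr).snd).symm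

end Unitization

section FreeGenerators

variable {𝕜}

-- The condition `constantCoeff P = 0` in `IsSFG` is automatic: it is the first component of
-- `aeval P` in the unitization.
open MvPolynomial in
theorem isSFG_iff_algebraicIndependent {S : Set X} :
    IsSFG 𝕜 S ↔ AlgebraicIndependent 𝕜 fun v : S => (v : Unitization 𝕜 X) := by
  refine ⟨fun hS => algebraicIndependent_iff.mpr fun Q hQ => ?_, fun hS n x hxS hx P hP _ => ?_⟩
  · by_contra hQ0
    obtain ⟨n, f, hf, q, rfl⟩ := exists_fin_rename Q
    have hcc : constantCoeff q = 0 := by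
      simpa [hQ] using (Unitization.fst_aeval_inr (R := 𝕜) ((↑) : S → X) (rename f q)).symm
    refine hS n (fun i => f i) (fun i => (f i).2) (Subtype.val_injective.comp hf) q
      (by rintro rfl; simp at hQ0) hcc ?_
    rwa [aeval_rename] at hQ
  · have := hS.comp (fun i => ⟨x i, hxS i⟩) fun i j h => hx congr(($h).val)
    exact fun h => hP (algebraicIndependent_iff.mp this P h)

theorem isSFG_range {ι : Type} {z : ι → X}
    (hz : AlgebraicIndependent 𝕜 fun i => (z i : Unitization 𝕜 X)) : IsSFG 𝕜 (Set.range z) := by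
  have hinj : Function.Injective z := fun i j h => hz.injective (by simp [h])
  refine isSFG_iff_algebraicIndependent.mpr ?_
  convert hz.comp _ (Equiv.ofInjective z hinj).symm.injective with v
  simp [Equiv.apply_ofInjective_symm]

theorem AlgebraicIndependent.nonUnitalAdjoin_image_inf_nonUnitalAdjoin_image {ι : Type}
    {z : ι → X} (hz : AlgebraicIndependent 𝕜 fun i => (z i : Unitization 𝕜 X)) {s t : Set ι}
    (hst : Disjoint s t) :
    NonUnitalAlgebra.adjoin 𝕜 (z '' s) ⊓ NonUnitalAlgebra.adjoin 𝕜 (z '' t) = ⊥ := by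
  rw [eq_bot_iff]
  rintro a ⟨hs, ht⟩
  rw [NonUnitalAlgebra.mem_bot]
  refine Unitization.inr_mem_bot (R := 𝕜) (A := X) ?_
  rw [← hz.adjoin_image_inf_adjoin_image hst]
  exact ⟨by simpa [Set.image_image] using Unitization.inr_mem_adjoin hs,
    by simpa [Set.image_image] using Unitization.inr_mem_adjoin ht⟩

end FreeGenerators

open scoped Topology in
theorem exists_ne_zero_add_smul_mem {K E : Type*} [NontriviallyNormedField K] [AddCommGroup E]
    [Module K E] [TopologicalSpace E] [ContinuousAdd E] [ContinuousSMul K E] {U : Set E}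
    (hU : IsOpen U) {a : E} (ha : a ∈ U) (b : E) : ∃ c : K, c ≠ 0 ∧ a + c • b ∈ U := by
  have hcont : Continuous fun c : K => a + c • b := by fun_prop
  have hnhds : ∀ᶠ c in 𝓝[≠] (0 : K), a + c • b ∈ U :=
    nhdsWithin_le_nhds (hcont.continuousAt.preimage_mem_nhds (hU.mem_nhds (by simpa using ha)))
  exact (hnhds.and self_mem_nhdsWithin).exists.imp fun c hc => ⟨hc.2, hc.1⟩

theorem exists_isTopologicalBasis_mk_eq_tsWeight (Y : Type u) [TopologicalSpace Y] :
    ∃ B : Set (Set Y), TopologicalSpace.IsTopologicalBasis B ∧ #B = tsWeight Y :=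
  csInf_mem (s := {c | ∃ B : Set (Set Y), TopologicalSpace.IsTopologicalBasis B ∧ #B = c})
    ⟨_, _, TopologicalSpace.isTopologicalBasis_opens, rfl⟩

section Construction

variable {𝕜} [TopologicalSpace X]

open scoped Ordinal in
theorem IsSFG.exists_algebraicIndependent_mem [ContinuousAdd X] [ContinuousSMul 𝕜 X] {F : Set X}
    (hF : IsSFG 𝕜 F) (hF0 : ℵ₀ ≤ #F) {T : Type} (hT : #T ≤ #F) {U : T → Set X}
    (hU : ∀ t, IsOpen (U t)) (hUF : ∀ t, (U t ∩ NonUnitalAlgebra.adjoin 𝕜 F).Nonempty) :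
    ∃ z : T → X, (AlgebraicIndependent 𝕜 fun t => (z t : Unitization 𝕜 X)) ∧
      ∀ t, z t ∈ U t ∧ z t ∈ NonUnitalAlgebra.adjoin 𝕜 F := by
  let V := (#F).ord.ToType
  have hV : #V = #F := mk_ord_toType _
  obtain ⟨e⟩ : Nonempty (V ≃ F) := Cardinal.eq.mp hV
  have hx : AlgebraicIndependent 𝕜 fun v => ((e v : X) : Unitization 𝕜 X) :=
    (isSFG_iff_algebraicIndependent.mp hF).comp e e.injective
  have hrange : Set.range (fun v => ((e v : X) : Unitization 𝕜 X)) = (↑) '' F := by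
    rw [Set.image_eq_range]
    exact e.surjective.range_comp fun f : F => ((f : X) : Unitization 𝕜 X)
  choose a haU haF using hUF
  have hd : ∀ t, ∃ P : MvPolynomial V 𝕜, MvPolynomial.aeval (fun v => ((e v : X) : Unitization 𝕜 X)) P = a t := by
    intro t
    have := Unitization.inr_mem_adjoin (haF t)
    rwa [← hrange, Algebra.adjoin_range_eq_range_aeval, AlgHom.mem_range] at this
  choose d hd using hd
  obtain ⟨s, hs⟩ := hx.exists_add_smul (by rw [hV, Ordinal.type_toType]) (hV ▸ hF0)
    (hT.trans_eq hV.symm) d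
  choose c hc0 hcU using fun t => exists_ne_zero_add_smul_mem (K := 𝕜) (hU t) (haU t) (e (s t) : X)
  refine ⟨fun t => a t + c t • (e (s t) : X), ?_, fun t => ⟨hcU t, add_mem (haF t)
    (SMulMemClass.smul_mem _ (NonUnitalAlgebra.subset_adjoin 𝕜 (e (s t)).2))⟩⟩
  convert hs c hc0 using 2 with t
  simp [hd]

theorem infStronglyDenseAlgebrable_of_algebraicIndependent {M : Set X} {α : Cardinal}
    {ι β : Type} {z : ι × β → X} (hz : AlgebraicIndependent 𝕜 fun p => (z p : Unitization 𝕜 X))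
    (hι : #ι = α) (hβ : #β = α)
    (hdense : ∀ i, Dense (NonUnitalAlgebra.adjoin 𝕜 (Set.range (z ∘ Prod.mk i)) : Set X))
    (hM : ∀ i, (NonUnitalAlgebra.adjoin 𝕜 (Set.range (z ∘ Prod.mk i)) : Set X) ⊆ M ∪ {0}) :
    InfStronglyDenseAlgebrable 𝕜 M α α := by
  have hblock : ∀ i, AlgebraicIndependent 𝕜 fun b => (z (i, b) : Unitization 𝕜 X) :=
    fun i => hz.comp _ (Prod.mk_right_injective i)
  refine ⟨ι, fun i => Set.range (z ∘ Prod.mk i), hι,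
    fun i => ⟨isSFG_range (hblock i), ?_, hdense i, hM i⟩, fun i j hij => ?_⟩
  · exact (mk_range_eq (z ∘ Prod.mk i) fun b b' h => (hblock i).injective (congrArg _ h)).trans hβ
  · simp only [Set.range_comp]
    refine hz.nonUnitalAdjoin_image_inf_nonUnitalAdjoin_image (Set.disjoint_left.mpr ?_)
    rintro _ ⟨b, rfl⟩ ⟨b', h⟩
    exact hij congr(($h).1).symm

end Construction

/-- Let `X` be a commutative topological algebra over `𝕜` (`𝕜 = ℝ` or `ℂ`),
`M ⊆ X` and `α ≥ ℵ₀` a cardinal with `α ≥ w(X)`.  Then `M` is `α`-infinitely strongly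
`α`-dense-algebrable iff `M` is strongly `α`-dense-algebrable. -/
theorem stmt16 [TopologicalSpace X] [IsTopologicalRing X] [ContinuousSMul 𝕜 X]
    (M : Set X) (α : Cardinal) (hinf : Cardinal.aleph0 ≤ α) (hw : tsWeight X ≤ α) :
    InfStronglyDenseAlgebrable 𝕜 M α α ↔ StronglyDenseAlgebrable 𝕜 M α := by
  have hα : α ≠ 0 := (aleph0_pos.trans_le hinf).ne'
  refine ⟨fun ⟨ι, F, hι, hF, _⟩ => ?_, fun ⟨F, hF, hFα, hdense, hM⟩ => ?_⟩
  · obtain ⟨i⟩ : Nonempty ι := mk_ne_zero_iff.mp (hι ▸ hα)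
    exact ⟨F i, hF i⟩
  obtain ⟨B, hB, hBw⟩ := exists_isTopologicalBasis_mk_eq_tsWeight X
  let J := {U : Set X // U ∈ B ∧ U.Nonempty}
  have hJ : #J ≤ α := (mk_subtype_le_of_subset fun U hU => hU.1).trans (hBw.trans_le hw)
  have : Nonempty α.out := mk_ne_zero_iff.mp (by rwa [mk_out])
  have : Nonempty J := by
    obtain ⟨U, hU, h0, -⟩ := hB.exists_subset_of_mem_open (Set.mem_univ (0 : X)) isOpen_univ
    exact ⟨⟨U, hU, 0, h0⟩⟩
  have hβ : #(J × α.out) = α := by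
    simpa [mk_out] using mul_eq_right hinf hJ (mk_ne_zero J)
  obtain ⟨z, hz, hzUF⟩ := hF.exists_algebraicIndependent_mem (hFα ▸ hinf)
    (T := α.out × J × α.out) (U := fun p => p.2.1.1)
    (by simp [hβ, hFα, mul_eq_self hinf]) (fun p => hB.isOpen p.2.1.2.1)
    fun p => hdense.inter_open_nonempty _ (hB.isOpen p.2.1.2.1) p.2.1.2.2
  refine infStronglyDenseAlgebrable_of_algebraicIndependent hz (mk_out α) hβ (fun i => ?_)
    fun i y hy => hM (NonUnitalAlgebra.adjoin_le (Set.range_subset_iff.mpr fun b => (hzUF (i, b)).2) hy)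
  rw [hB.dense_iff]
  intro U hU hne
  let p : α.out × J × α.out := (i, ⟨U, hU, hne⟩, Classical.arbitrary _)
  exact ⟨z p, (hzUF p).1, NonUnitalAlgebra.subset_adjoin 𝕜 ⟨p.2, rfl⟩⟩
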